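/- arXiv:2601.18701 — 3 statements merged into one kernel-verified Lean document; each statement's English description precedes it below -/
import Mathlib

section
/- Let R be a commutative ring. Define the Newton–Girard evaluations s_k : (ℕ → R) → R recursively for k ≥ 1 by s_k(y) = (−1)^{k−1} · k · y(k) + ∑_{i=1}^{k−1} (−1)^{i−1} · y(i) · s_{k−i}(y). Let c : ℕ → R be any sequence with c(0) = 1, and define p : ℕ → R by p(0) = 1 and, for k ≥ 1, p(k) = c(k)^2 + 2 ∑_{i=0}^{k−1} (−1)^{k+i} c(2k−i) · c(i). Then for every k ≥ 1, s_k(p) = s_{2k}(c). -/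
/-- The Newton–Girard evaluations: `newtonGirard y k` is `s_k(y(1), …, y(k))`, defined by
Newton's recursion `s_k = (−1)^{k−1} k y(k) + ∑_{i=1}^{k−1} (−1)^{i−1} y(i) s_{k−i}`. -/
def newtonGirard {R : Type*} [CommRing R] (y : ℕ → R) : ℕ → R
  | 0 => 0
  | (m + 1) =>
      (-1) ^ m * ((m + 1 : ℕ) : R) * y (m + 1) +
        ∑ i ∈ Finset.range m, (-1) ^ i * y (i + 1) * newtonGirard y (m - i)
  termination_by k => k
  decreasing_by omega

section NG
variable {R : Type*} [CommRing R]

lemma newtonGirard_zero (y : ℕ → R) : newtonGirard y 0 = 0 := by rw [newtonGirard]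

lemma newtonGirard_succ (y : ℕ → R) (m : ℕ) :
    newtonGirard y (m+1) = (-1) ^ m * ((m + 1 : ℕ) : R) * y (m + 1) +
        ∑ i ∈ Finset.range m, (-1) ^ i * y (i + 1) * newtonGirard y (m - i) := by
  rw [newtonGirard]

/-- Newton's identity in convolution form. -/
lemma newton_general (y : ℕ → R) (hy : y 0 = 1) (m : ℕ) :
    ∑ i ∈ Finset.range (m+1), (-1) ^ i * y i * newtonGirard y (m - i)
      + (m : R) * ((-1) ^ m * y m) = 0 := by
  cases m with
  | zero => simp [newtonGirard_zero, hy]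
  | succ k =>
    rw [Finset.sum_range_succ' (fun i => (-1 : R) ^ i * y i * newtonGirard y (k + 1 - i))]
    simp only [Nat.sub_zero, pow_zero, one_mul, hy]
    rw [Finset.sum_range_succ]
    rw [show k + 1 - (k + 1) = 0 from by omega, newtonGirard_zero]
    have hrec := newtonGirard_succ y k
    have hre : ∀ i ∈ Finset.range k,
        (-1 : R) ^ (i+1) * y (i+1) * newtonGirard y (k + 1 - (i+1))
          = -((-1) ^ i * y (i + 1) * newtonGirard y (k - i)) := by
      intro i hi
      rw [show k + 1 - (i+1) = k - i from by omega, pow_succ]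
      ring
    rw [Finset.sum_congr rfl hre, Finset.sum_neg_distrib]
    rw [hrec]
    push_cast
    ring

/-- Newton's recursion determines the sequence uniquely. -/
lemma newton_unique (y : ℕ → R) (hy : y 0 = 1) (τ : ℕ → R) (hτ0 : τ 0 = 0)
    (h : ∀ m, ∑ i ∈ Finset.range (m+1), (-1) ^ i * y i * τ (m - i)
      + (m : R) * ((-1) ^ m * y m) = 0) :
    ∀ m, τ m = newtonGirard y m := by
  intro m
  induction m using Nat.strong_induction_on with
  | _ m ih =>
    have h1 := h m
    have h2 := newton_general y hy m
    rw [Finset.sum_range_succ'] at h1 h2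
    have e : ∀ i ∈ Finset.range m, (-1:R)^(i+1) * y (i+1) * τ (m - (i+1))
        = (-1)^(i+1) * y (i+1) * newtonGirard y (m - (i+1)) := fun i hi => by
      rw [ih (m - (i+1)) (by have := Finset.mem_range.mp hi; omega)]
    rw [Finset.sum_congr rfl e] at h1
    simp only [Nat.sub_zero, pow_zero, one_mul, hy] at h1 h2
    linear_combination h1 - h2

/-- `newtonGirard` commutes with ring homomorphisms. -/
lemma map_newtonGirard {T : Type*} [CommRing T] (f : R →+* T) (y : ℕ → R) :
    ∀ k, f (newtonGirard y k) = newtonGirard (fun n => f (y n)) k := by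
  intro k
  induction k using Nat.strong_induction_on with
  | _ k ih =>
    match k with
    | 0 => simp [newtonGirard_zero]
    | (m+1) =>
      rw [newtonGirard, newtonGirard]
      push_cast [map_add, map_mul, map_sum, map_pow, map_neg, map_one, map_natCast]
      refine congrArg _ (Finset.sum_congr rfl fun i hi => ?_)
      rw [ih (m - i) (by omega)]

noncomputable def psD (f : PowerSeries R) : PowerSeries R :=
  PowerSeries.mk fun n => (n : R) * PowerSeries.coeff n f

lemma coeff_psD (f : PowerSeries R) (n : ℕ) :
    PowerSeries.coeff n (psD f) = (n : R) * PowerSeries.coeff n f := by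
  simp [psD]

lemma psD_mul (f g : PowerSeries R) : psD (f * g) = psD f * g + f * psD g := by
  ext n
  rw [map_add, coeff_psD, PowerSeries.coeff_mul, PowerSeries.coeff_mul,
    PowerSeries.coeff_mul, Finset.mul_sum, ← Finset.sum_add_distrib]
  refine Finset.sum_congr rfl fun x hx => ?_
  have hx' : x.1 + x.2 = n := Finset.HasAntidiagonal.mem_antidiagonal.mp hx
  rw [coeff_psD, coeff_psD, ← hx']
  push_cast
  ring

lemma neg_one_pow_sub (i n : ℕ) (h : i ≤ n) : ((-1 : R)) ^ (n - i) = (-1) ^ (n + i) := by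
  conv_rhs => rw [show n + i = (n - i) + 2 * i from by omega, pow_add, pow_mul]
  simp

end NG

section Main
variable {R : Type*} [CommRing R]
open PowerSeries Finset

lemma sum_range_even (k : ℕ) (f : ℕ → R) (hf : ∀ a, a < 2*k+1 → a % 2 = 1 → f a = 0) :
    ∑ a ∈ Finset.range (2*k+1), f a = ∑ i ∈ Finset.range (k+1), f (2*i) := by
  induction k with
  | zero => simp
  | succ n ih =>
    rw [show 2*(n+1)+1 = (2*n+1)+1+1 from by omega, Finset.sum_range_succ,
      Finset.sum_range_succ, ih (fun a ha h1 => hf a (by omega) h1),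
      Finset.sum_range_succ (fun i => f (2*i)) (n+1),
      hf (2*n+1) (by omega) (by omega), show 2*n+1+1 = 2*(n+1) from by omega]
    ring

lemma main_aux (h2 : ∀ x : R, x + x = 0 → x = 0) (c p : ℕ → R)
    (hc : c 0 = 1) (hp0 : p 0 = 1)
    (hp : ∀ k, 1 ≤ k →
      p k = c k ^ 2 + 2 * ∑ i ∈ Finset.range k, (-1) ^ (k + i) * (c (2 * k - i) * c i)) :
    ∀ k, 1 ≤ k → newtonGirard p k = newtonGirard c (2 * k) := by
  set S : ℕ → R := newtonGirard c with hS
  set Z : PowerSeries R := PowerSeries.mk fun i => (-1)^i * c i with hZdef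
  set Cc : PowerSeries R := PowerSeries.mk c with hCdef
  set Ss : PowerSeries R := PowerSeries.mk S with hSdef
  set Sb : PowerSeries R := PowerSeries.mk (fun j => (-1)^j * S j) with hSbdef
  have hsq : ∀ n : ℕ, ((-1:R))^n * (-1)^n = 1 := by
    intro n; rw [← pow_add, ← two_mul, pow_mul]; norm_num
  have hZS : Z * Ss + psD Z = 0 := by
    ext n
    rw [map_add, PowerSeries.coeff_mul, coeff_psD,
      Finset.Nat.sum_antidiagonal_eq_sum_range_succ_mk, map_zero]
    simp only [hZdef, hSdef, PowerSeries.coeff_mk]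
    exact newton_general c hc n
  have hCS : Cc * Sb + psD Cc = 0 := by
    ext n
    rw [map_add, PowerSeries.coeff_mul, coeff_psD,
      Finset.Nat.sum_antidiagonal_eq_sum_range_succ_mk, map_zero]
    simp only [hCdef, hSbdef, PowerSeries.coeff_mk]
    have hng := newton_general c hc n
    have step : ∑ i ∈ Finset.range (n+1), c i * ((-1:R)^(n-i) * S (n-i)) + (n:R) * c n
        = (-1:R)^n * (∑ i ∈ Finset.range (n+1), (-1)^i * c i * S (n-i)
            + (n:R) * ((-1)^n * c n)) := by
      rw [mul_add, Finset.mul_sum]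
      congr 1
      · refine Finset.sum_congr rfl fun i hi => ?_
        have hin : i ≤ n := by have := Finset.mem_range.mp hi; omega
        rw [neg_one_pow_sub i n hin, pow_add]
        ring
      · linear_combination (-((n:R) * c n)) * hsq n
    rw [step, hng, mul_zero]
  have hmain : psD (Cc * Z) + (Cc * Z) * (Sb + Ss) = 0 := by
    rw [psD_mul]
    linear_combination Z * hCS + Cc * hZS
  set A : ℕ → R := fun n => PowerSeries.coeff n (Cc * Z) with hAdef
  have hA : ∀ k, A (2*k) = (-1)^k * p k := by
    intro k
    have expand : A (2*k) = ∑ a ∈ Finset.range (2*k+1),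
        c a * ((-1:R)^(2*k-a) * c (2*k-a)) := by
      simp only [hAdef]
      rw [PowerSeries.coeff_mul, Finset.Nat.sum_antidiagonal_eq_sum_range_succ_mk]
      simp only [hCdef, hZdef, PowerSeries.coeff_mk]
    rcases Nat.eq_zero_or_pos k with rfl | hk
    · rw [expand]; simp [hc, hp0]
    · rw [expand, hp k hk]
      set t : ℕ → R := fun a => c a * ((-1:R)^(2*k-a) * c (2*k-a)) with htdef
      have split : ∑ a ∈ Finset.range (2*k+1), t a
          = (∑ a ∈ Finset.range (k+1), t a) + ∑ i ∈ Finset.range k, t (k+1+i) := by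
        rw [show 2*k+1 = (k+1)+k from by omega, Finset.sum_range_add]
      have refl2 : ∑ i ∈ Finset.range k, t (k+1+i) = ∑ i ∈ Finset.range k, t (2*k-i) := by
        rw [← Finset.sum_range_reflect (fun i => t (k+1+i)) k]
        refine Finset.sum_congr rfl fun i hi => ?_
        have := Finset.mem_range.mp hi
        congr 1; omega
      rw [split, refl2, Finset.sum_range_succ]
      have htk : t k = (-1:R)^k * c k ^ 2 := by
        rw [htdef]; simp only []
        rw [show 2*k - k = k from by omega]; ring
      have ht1 : ∀ i ∈ Finset.range k, t i = (-1:R)^i * (c (2*k-i) * c i) := by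
        intro i hi
        have hik : i ≤ 2*k := by have := Finset.mem_range.mp hi; omega
        rw [htdef]; simp only []
        rw [neg_one_pow_sub i (2*k) hik, show 2*k+i = 2*k+i from rfl, pow_add, pow_mul]
        norm_num; ring
      have ht2 : ∀ i ∈ Finset.range k, t (2*k-i) = (-1:R)^i * (c (2*k-i) * c i) := by
        intro i hi
        have hik : i ≤ 2*k := by have := Finset.mem_range.mp hi; omega
        rw [htdef]; simp only []
        rw [show 2*k - (2*k - i) = i from by omega]
        ring
      rw [Finset.sum_congr rfl ht1, Finset.sum_congr rfl ht2, htk]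
      rw [mul_add, Finset.mul_sum, Finset.mul_sum]
      have hrhs : ∀ i ∈ Finset.range k, (-1:R)^k * (2*((-1:R)^(k+i) * (c (2*k-i)*c i)))
          = (-1:R)^i * (c (2*k-i)*c i) + (-1:R)^i * (c (2*k-i)*c i) := by
        intro i hi
        rw [pow_add]
        linear_combination (2 * ((-1:R)^i * (c (2*k-i)*c i))) * hsq k
      rw [Finset.sum_congr rfl hrhs, Finset.sum_add_distrib]
      ring
  -- key convolution identity for (p, σ)
  set σ : ℕ → R := fun j => S (2*j) with hσdef
  have key : ∀ m, ∑ i ∈ Finset.range (m+1), (-1:R) ^ i * p i * σ (m - i)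
      + (m : R) * ((-1) ^ m * p m) = 0 := by
    intro m
    rcases Nat.eq_zero_or_pos m with rfl | hm
    · simp [hσdef, hS, newtonGirard_zero, hp0]
    · set g : ℕ → R := fun a => A a * ((-1:R)^(2*m-a) * S (2*m-a) + S (2*m-a)) with hgdef
      have hcoeffSum : ∀ a, PowerSeries.coeff a (Sb + Ss) = (-1:R)^a * S a + S a := by
        intro a
        rw [map_add, hSbdef, hSdef, PowerSeries.coeff_mk, PowerSeries.coeff_mk]
      have hco : ((2*m:ℕ):R) * A (2*m) + ∑ a ∈ Finset.range (2*m+1), g a = 0 := by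
        have h0 := congrArg (PowerSeries.coeff (2*m)) hmain
        rw [map_add, map_zero, coeff_psD, PowerSeries.coeff_mul (2*m) (Cc*Z) (Sb+Ss),
          Finset.Nat.sum_antidiagonal_eq_sum_range_succ_mk] at h0
        rw [← h0]
        congr 1
        refine Finset.sum_congr rfl fun a ha => ?_
        rw [hgdef]; simp only []
        rw [hcoeffSum]
      have hgodd : ∀ a, a < 2*m+1 → a % 2 = 1 → g a = 0 := by
        intro a ha hodd
        have hoddsub : Odd (2*m - a) := by
          rw [Nat.odd_iff]; omega
        rw [hgdef]; simp only []
        rw [hoddsub.neg_one_pow]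
        ring
      have heven : ∑ a ∈ Finset.range (2*m+1), g a = ∑ i ∈ Finset.range (m+1), g (2*i) :=
        sum_range_even m g hgodd
      have hgeven : ∀ i ∈ Finset.range (m+1), g (2*i)
          = (-1:R)^i * p i * σ (m-i) + (-1:R)^i * p i * σ (m-i) := by
        intro i hi
        have him : i ≤ m := by have := Finset.mem_range.mp hi; omega
        rw [hgdef]; simp only []
        rw [show 2*m - 2*i = 2*(m-i) from by omega, pow_mul]
        rw [hA i, hσdef]
        simp only []
        norm_num
        ring
      rw [heven, Finset.sum_congr rfl hgeven, Finset.sum_add_distrib, hA m] at hco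
      apply h2
      rw [show ((2*m : ℕ) : R) = (m : R) + (m : R) from by push_cast; ring] at hco
      linear_combination hco
  have huniq := newton_unique p hp0 σ (by simp [hσdef, hS, newtonGirard_zero]) key
  intro k hk
  rw [← huniq k]
end Main

/-- If `p` is the sequence of Pontryagin classes expressed in terms of Chern classes `c` by
`p_k = c_k² + 2 ∑_{i=0}^{k−1} (−1)^{k+i} c_{2k−i} c_i`, then the Newton–Girard evaluations
satisfy `s_k(p) = s_{2k}(c)` for every `k ≥ 1`. -/
theorem newtonGirard_pontryagin_eq_chern {R : Type*} [CommRing R] (c p : ℕ → R)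
    (hc : c 0 = 1) (hp0 : p 0 = 1)
    (hp : ∀ k, 1 ≤ k →
      p k = c k ^ 2 + 2 * ∑ i ∈ Finset.range k, (-1) ^ (k + i) * (c (2 * k - i) * c i)) :
    ∀ k, 1 ≤ k → newtonGirard p k = newtonGirard c (2 * k) := by
  set R₀ := MvPolynomial ℕ ℤ with hR₀
  set C' : ℕ → R₀ := fun n => if n = 0 then 1 else MvPolynomial.X n with hC'
  set P' : ℕ → R₀ := fun k => if k = 0 then 1 else
    C' k ^ 2 + 2 * ∑ i ∈ Finset.range k, (-1) ^ (k + i) * (C' (2 * k - i) * C' i) with hP'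
  have h2 : ∀ x : R₀, x + x = 0 → x = 0 := by
    intro x hx
    have h2x : (2 : R₀) * x = 0 := by linear_combination hx
    rcases mul_eq_zero.mp h2x with h | h
    · exact absurd h (by norm_num)
    · exact h
  have hmain := main_aux h2 C' P' (by simp [hC']) (by simp [hP'])
    (fun k hk => by rw [hP']; simp only []; rw [if_neg (by omega)]) 
  set φ : R₀ →+* R := (MvPolynomial.eval₂Hom (Int.castRingHom R) c) with hφ
  have φC : ∀ n, φ (C' n) = c n := by
    intro n
    rcases Nat.eq_zero_or_pos n with rfl | hn
    · simp [hC', hφ, hc]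
    · rw [hC']; simp only []
      rw [if_neg (by omega)]
      exact MvPolynomial.eval₂Hom_X' _ _ _
  have φP : ∀ n, φ (P' n) = p n := by
    intro n
    rcases Nat.eq_zero_or_pos n with rfl | hn
    · simp [hP', hφ, hp0]
    · rw [hP']; simp only []
      rw [if_neg (by omega), hp n hn]
      push_cast [map_add, map_mul, map_pow, map_sum, map_neg, map_one, map_ofNat]
      rw [φC]
      congr 1
      refine congrArg _ (Finset.sum_congr rfl fun i hi => ?_)
      rw [φC, φC]
  have hcc : c = fun n => φ (C' n) := funext fun n => (φC n).symm
  have hpp : p = fun n => φ (P' n) := funext fun n => (φP n).symm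
  intro k hk
  rw [hcc, hpp, ← map_newtonGirard, ← map_newtonGirard, hmain k hk]
end

section
/- For every natural number n, the dimension over ℚ of the submodule of weighted homogeneous polynomials of weighted degree n in MvPolynomial ℕ ℚ, where the variable X_i is assigned weight i + 1 (so the variables have weights 1, 2, 3, …), equals the number of partitions of n, i.e. Fintype.card (Nat.Partition n). -/
open Finsupp

lemma sum_toMultiset_map_succ (d : ℕ →₀ ℕ) :
    ((Finsupp.toMultiset d).map (· + 1)).sum = Finsupp.weight (fun i : ℕ => i + 1) d := by
  induction d using Finsupp.induction with
  | zero => simp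
  | single_add i a f hif ha ih =>
      rw [Finsupp.toMultiset_add, Multiset.map_add, Multiset.sum_add, ih,
        Finsupp.toMultiset_single, map_add]
      simp only [Multiset.map_nsmul, Multiset.map_singleton, Multiset.sum_nsmul,
        Multiset.sum_singleton, smul_eq_mul, Finsupp.weight_apply]
      rw [Finsupp.sum_single_index (by simp)]

/-- The equivalence between exponent vectors of weight `n` (weights `1,2,3,…`) and
partitions of `n`. -/
noncomputable def partitionEquiv (n : ℕ) :
    {d : ℕ →₀ ℕ // Finsupp.weight (fun i : ℕ => i + 1) d = n} ≃ Nat.Partition n where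
  toFun d :=
    { parts := (Finsupp.toMultiset d.1).map (· + 1)
      parts_pos := by
        intro i hi
        simp only [Multiset.mem_map] at hi
        obtain ⟨a, -, rfl⟩ := hi
        exact Nat.succ_pos a
      parts_sum := by rw [sum_toMultiset_map_succ, d.2] }
  invFun p :=
    ⟨Multiset.toFinsupp (p.parts.map (· - 1)), by
      rw [← sum_toMultiset_map_succ, Multiset.toFinsupp_toMultiset, Multiset.map_map]
      have : ∀ x ∈ p.parts, (((· + 1) ∘ (· - 1)) x) = x := by
        intro x hx
        have := p.parts_pos hx
        simp only [Function.comp_apply]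
        omega
      rw [Multiset.map_congr rfl this, Multiset.map_id']
      exact p.parts_sum⟩
  left_inv d := by
    ext1
    simp only [Multiset.map_map]
    have : ∀ x ∈ Finsupp.toMultiset d.1, (((· - 1) ∘ (· + 1)) x) = x := by
      intro x _; simp
    rw [Multiset.map_congr rfl this, Multiset.map_id', Finsupp.toMultiset_toFinsupp]
  right_inv p := by
    ext1
    simp only [Multiset.toFinsupp_toMultiset, Multiset.map_map]
    have : ∀ x ∈ p.parts, (((· + 1) ∘ (· - 1)) x) = x := by
      intro x hx
      have := p.parts_pos hx
      simp only [Function.comp_apply]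
      omega
    rw [Multiset.map_congr rfl this, Multiset.map_id']

/-- The dimension over `ℚ` of the space of weighted homogeneous polynomials of weighted
degree `n` in countably many variables of weights `1, 2, 3, …` equals the number of
partitions of `n`. -/
theorem finrank_weightedHomogeneous_eq_card_partitions (n : ℕ) :
    Module.finrank ℚ
        (MvPolynomial.weightedHomogeneousSubmodule ℚ (fun i : ℕ => i + 1) n) =
      Fintype.card (Nat.Partition n) := by
  letI : Fintype ↥{d : ℕ →₀ ℕ | Finsupp.weight (fun i : ℕ => i + 1) d = n} :=
    Fintype.ofEquiv _ (partitionEquiv n).symm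
  have hs : MvPolynomial.weightedHomogeneousSubmodule ℚ (fun i : ℕ => i + 1) n =
      MvPolynomial.restrictSupport ℚ {d : ℕ →₀ ℕ | Finsupp.weight (fun i : ℕ => i + 1) d = n} :=
    MvPolynomial.weightedHomogeneousSubmodule_eq_finsupp_supported ℚ _ _
  rw [hs, Module.finrank_eq_card_basis (MvPolynomial.basisRestrictSupport ℚ _)]
  exact Fintype.card_congr (partitionEquiv n)
end

section
/- For every natural number n and for δ ∈ {0, 1}, the dimension over ℚ of the submodule of weighted homogeneous polynomials of weighted degree 2n + δ in MvPolynomial (Option ℕ) ℚ, where the variable X_none is assigned weight 1 and the variable X_(some i) is assigned weight 2(i + 1), equals ∑_{m=0}^{n} Fintype.card (Nat.Partition m), the sum of the numbers of partitions of all m ≤ n. -/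
open Finsupp

namespace SpcAux

/-- The weight function. -/
noncomputable def w : Option ℕ → ℕ := fun i => Option.elim i 1 (fun j => 2 * (j + 1))

/-- lemma A -/
lemma sum_map_toMultiset (f : ℕ →₀ ℕ) :
    ((Finsupp.toMultiset f).map (· + 1)).sum = f.sum fun j c => c * (j + 1) := by
  induction f using Finsupp.induction with
  | zero => simp
  | single_add a b f ha hb ih =>
    rw [Finsupp.toMultiset_add, Multiset.map_add, Multiset.sum_add, ih,
      Finsupp.toMultiset_single,
      Finsupp.sum_add_index' (fun j => zero_mul ((j : ℕ) + 1))
        (fun j c₁ c₂ => add_mul c₁ c₂ _)]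
    simp [Finsupp.sum_single_index, Multiset.nsmul_singleton, mul_comm]

/-- lemma B -/
lemma weight_option (d : Option ℕ →₀ ℕ) :
    Finsupp.weight w d = d none + 2 * (d.some.sum fun j c => c * (j + 1)) := by
  have h := Finsupp.sum_option_index d (fun i c => c • w i)
    (fun o => zero_smul ℕ (w o)) (fun o m₁ m₂ => add_smul m₁ m₂ (w o))
  rw [Finsupp.weight_apply, h]
  simp only [w, smul_eq_mul, Option.elim, mul_one]
  rw [Finsupp.mul_sum]
  exact congrArg (d none + ·) (Finsupp.sum_congr fun j _ => by ring)

/-- D : reconstruction of parts. -/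
lemma map_toMultiset_comap {m : ℕ} (p : Nat.Partition m) :
    ((Finsupp.toMultiset (Finsupp.comapDomain (· + 1) p.parts.toFinsupp
        (add_left_injective 1).injOn)).map (· + 1)) = p.parts := by
  refine Multiset.ext.mpr fun k => ?_
  match k with
  | 0 =>
    rw [Multiset.count_eq_zero_of_notMem, Multiset.count_eq_zero_of_notMem]
    · exact fun h => (p.parts_pos h).ne' rfl
    · simp
  | (j+1) =>
    rw [Multiset.count_map_eq_count' _ _ (add_left_injective 1),
      Finsupp.count_toMultiset, Finsupp.comapDomain_apply, Multiset.toFinsupp_apply]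

end SpcAux

namespace SpcAux2
open SpcAux

noncomputable def msum (f : ℕ →₀ ℕ) : ℕ := f.sum fun j c => c * (j + 1)

noncomputable def dOf (a : ℕ) (f : ℕ →₀ ℕ) : Option ℕ →₀ ℕ :=
  Finsupp.single none a + f.mapDomain Option.some

lemma dOf_none (a : ℕ) (f : ℕ →₀ ℕ) : dOf a f none = a := by
  rw [dOf, Finsupp.add_apply, Finsupp.single_eq_same,
    Finsupp.mapDomain_notin_range _ _ (by simp), add_zero]

lemma dOf_some (a : ℕ) (f : ℕ →₀ ℕ) : (dOf a f).some = f := by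
  ext j
  rw [Finsupp.some_apply, dOf, Finsupp.add_apply,
    Finsupp.single_eq_of_ne (by simp), Finsupp.mapDomain_apply (Option.some_injective ℕ), zero_add]

noncomputable def fOf {m : ℕ} (p : Nat.Partition m) : ℕ →₀ ℕ :=
  Finsupp.comapDomain (· + 1) p.parts.toFinsupp (add_left_injective 1).injOn

lemma map_toMultiset_fOf {m : ℕ} (p : Nat.Partition m) :
    (Finsupp.toMultiset (fOf p)).map (· + 1) = p.parts :=
  map_toMultiset_comap p

lemma msum_fOf {m : ℕ} (p : Nat.Partition m) : msum (fOf p) = m := by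
  have h := sum_map_toMultiset (fOf p)
  rw [map_toMultiset_fOf p, p.parts_sum] at h
  exact h.symm

lemma partition_heq {a b : ℕ} (h : a = b) {p : Nat.Partition a} {q : Nat.Partition b}
    (hp : p.parts = q.parts) : HEq p q := by
  subst h
  exact heq_of_eq (Nat.Partition.ext hp)

noncomputable def spcEquiv (n δ : ℕ) (hδ : δ = 0 ∨ δ = 1) :
    {d : Option ℕ →₀ ℕ // Finsupp.weight w d = 2 * n + δ} ≃
      Σ m : Fin (n + 1), Nat.Partition m where
  toFun x :=
    ⟨⟨msum x.1.some, by
        have hb := weight_option x.1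
        rw [x.2] at hb
        have hms : msum x.1.some = x.1.some.sum fun j c => c * (j + 1) := rfl
        rw [Nat.lt_succ_iff]
        omega⟩,
      { parts := (Finsupp.toMultiset x.1.some).map (· + 1)
        parts_pos := fun hi => by
          obtain ⟨y, -, rfl⟩ := Multiset.mem_map.mp hi
          omega
        parts_sum := sum_map_toMultiset x.1.some }⟩
  invFun x :=
    ⟨dOf (2 * n + δ - 2 * x.1.1) (fOf x.2), by
      rw [weight_option, dOf_none, dOf_some, ← msum, msum_fOf]
      have := x.1.isLt
      omega⟩
  left_inv x := by
    dsimp only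
    apply Subtype.ext
    ext i
    match i with
    | Option.none =>
      rw [dOf_none]
      have hb := weight_option x.1
      rw [x.2] at hb
      have hms : msum x.1.some = x.1.some.sum fun j c => c * (j + 1) := rfl
      omega
    | Option.some j =>
      rw [← Finsupp.some_apply, dOf_some, fOf, Finsupp.comapDomain_apply,
        Multiset.toFinsupp_apply]
      dsimp only
      rw [Multiset.count_map_eq_count' _ _ (add_left_injective 1),
        Finsupp.count_toMultiset, Finsupp.some_apply]
  right_inv x := by
    dsimp only
    obtain ⟨⟨m, hm⟩, p⟩ := x
    have hs : (dOf (2 * n + δ - 2 * m) (fOf p)).some = fOf p := dOf_some _ _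
    refine Sigma.ext (Fin.ext ?_) (partition_heq ?_ ?_)
    · show msum (dOf (2 * n + δ - 2 * m) (fOf p)).some = m
      rw [hs, msum_fOf]
    · show (msum (dOf (2 * n + δ - 2 * m) (fOf p)).some : ℕ) = m
      rw [hs, msum_fOf]
    · show (Finsupp.toMultiset (dOf (2 * n + δ - 2 * m) (fOf p)).some).map (· + 1) = p.parts
      rw [hs, map_toMultiset_fOf]

end SpcAux2

/-- The dimension over `ℚ` of the space of weighted homogeneous polynomials of weighted
degree `2n + δ` (`δ ∈ {0,1}`) in variables `X_none` of weight `1` and `X_(some i)` of weight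
`2(i+1)` equals `∑_{m=0}^{n} P(m)`, the sum of the numbers of partitions of all `m ≤ n`. -/
theorem finrank_weightedHomogeneous_spc_eq_sum_card_partitions (n δ : ℕ)
    (hδ : δ = 0 ∨ δ = 1) :
    Module.finrank ℚ
        (MvPolynomial.weightedHomogeneousSubmodule ℚ
          (fun i : Option ℕ => Option.elim i 1 (fun j => 2 * (j + 1))) (2 * n + δ)) =
      ∑ m ∈ Finset.range (n + 1), Fintype.card (Nat.Partition m) := by
  classical
  have he : MvPolynomial.weightedHomogeneousSubmodule ℚ SpcAux.w (2 * n + δ) =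
      MvPolynomial.restrictSupport ℚ
        {d : Option ℕ →₀ ℕ | Finsupp.weight SpcAux.w d = 2 * n + δ} :=
    MvPolynomial.weightedHomogeneousSubmodule_eq_finsupp_supported ℚ SpcAux.w _
  show Module.finrank ℚ
      (MvPolynomial.weightedHomogeneousSubmodule ℚ SpcAux.w (2 * n + δ)) = _
  rw [he]
  haveI : Fintype {d : Option ℕ →₀ ℕ | Finsupp.weight SpcAux.w d = 2 * n + δ} :=
    Fintype.ofEquiv _ (SpcAux2.spcEquiv n δ hδ).symm
  rw [Module.finrank_eq_card_basis (MvPolynomial.basisRestrictSupport ℚ _)]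
  rw [← Fin.sum_univ_eq_sum_range, ← Fintype.card_sigma]
  exact Fintype.card_congr (SpcAux2.spcEquiv n δ hδ)
end
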